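/- Let X be a random field on [0,∞)² with self-similar covariance of index (H₁,H₂), H₁, H₂ ∈ (0,1), with second-moment stationary rectangular increments and E[X(1,1)²] = 1. Define R : ℝ² → ℝ by R(v₁,v₂) = e^{−H₁v₁ − H₂v₂}·E[X(1,1)·X(e^{v₁}, e^{v₂})] (the covariance function of the Lamperti transform of X). Then for all v = (v₁,v₂) ∈ ℝ²: R(v₁,v₂) + R(v₁,−v₂) = (1/2)·F_{H₁}(v₁)·F_{H₂}(v₂) = 2·R₀(v₁,v₂). -/

import Mathlib

open MeasureTheory Real

/-- `F_H(v) = 2 cosh(Hv) - |2 sinh(v/2)|^{2H}`. -/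
noncomputable def Ffun (H v : ℝ) : ℝ :=
  2 * Real.cosh (H * v) - |2 * Real.sinh (v / 2)| ^ (2 * H)

/-- `R₀(v₁,v₂) = (1/4) F_{H₁}(v₁) F_{H₂}(v₂)`. -/
noncomputable def Rzero (H₁ H₂ v₁ v₂ : ℝ) : ℝ :=
  (1 / 4) * Ffun H₁ v₁ * Ffun H₂ v₂

/-!
The hypotheses do not determine the covariance `E[X(s) X(t)]`, only its symmetrization
`E[X(s) X(t)] + E[X(s₁,t₂) X(t₁,s₂)]`: by self-similarity `X` vanishes on the axes, so
`X(x,y)` and each of its edge differences are rectangular increments, and the symmetrization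
is a signed sum of nine squared increments over the rectangles `I × J` with
`I ∈ {[0,s₁], [0,t₁], [s₁,t₁]}`, `J ∈ {[0,s₂], [0,t₂], [s₂,t₂]}`. Stationarity and
self-similarity give `E[(Δ_{I×J} X)²] = |I|^{2H₁} |J|^{2H₂}`, so the sum factorizes into the
product of two fractional Brownian motion covariances. Taking `s = (1,1)`, `t = (e^{v₁}, e^{v₂})`
and rescaling the second coordinate by `e^{-v₂}` gives the theorem.

Since `X` is not assumed measurable (only `X(t)²` is integrable), the integrability of the
products `X(s) X(t)` has to be derived along the way.
-/

section Measurability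

variable {Ω : Type*} [MeasurableSpace Ω] {μ : Measure Ω}

/-- `A B (A² + B² + C² + D²)` is a polynomial in the given measurable functions, and where
`A² + B² + C² + D²` vanishes, `A B = 0 = 0 / 0`. -/
theorem aemeasurable_mul_of_aemeasurable_cross {A B C D : Ω → ℝ}
    (hA : AEMeasurable (fun ω => A ω ^ 2) μ) (hB : AEMeasurable (fun ω => B ω ^ 2) μ)
    (hC : AEMeasurable (fun ω => C ω ^ 2) μ) (hD : AEMeasurable (fun ω => D ω ^ 2) μ)
    (hAC : AEMeasurable (fun ω => A ω * C ω) μ) (hAD : AEMeasurable (fun ω => A ω * D ω) μ)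
    (hBC : AEMeasurable (fun ω => B ω * C ω) μ) (hBD : AEMeasurable (fun ω => B ω * D ω) μ)
    (hS : AEMeasurable (fun ω => A ω * B ω + C ω * D ω) μ) :
    AEMeasurable (fun ω => A ω * B ω) μ := by
  refine ((((hAC.mul hBC).add (hAD.mul hBD)).add (hS.mul (hA.add hB))).sub
    ((hAC.mul hAD).add (hBC.mul hBD))).div (((hA.add hB).add hC).add hD)
    |>.congr (ae_of_all _ fun ω => ?_)
  simp only [Pi.add_apply, Pi.mul_apply, Pi.sub_apply, Pi.div_apply]
  by_cases h : A ω ^ 2 + B ω ^ 2 + C ω ^ 2 + D ω ^ 2 = 0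
  · have hA : A ω = 0 := by nlinarith [sq_nonneg (B ω), sq_nonneg (C ω), sq_nonneg (D ω)]
    simp [hA, show B ω ^ 2 + C ω ^ 2 + D ω ^ 2 = 0 by simpa [hA] using h]
  · field_simp
    ring

theorem integrable_mul_of_integrable_sq {A B : Ω → ℝ}
    (hA : Integrable (fun ω => A ω ^ 2) μ) (hB : Integrable (fun ω => B ω ^ 2) μ)
    (hAB : AEMeasurable (fun ω => A ω * B ω) μ) :
    Integrable (fun ω => A ω * B ω) μ := by
  refine ((hA.add hB).div_const 2).mono' hAB.aestronglyMeasurable (ae_of_all _ fun ω => ?_)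
  rw [Pi.add_apply, Real.norm_eq_abs, abs_mul]
  nlinarith [two_mul_le_add_sq |A ω| |B ω|, sq_abs (A ω), sq_abs (B ω)]

theorem ae_eq_zero_of_integral_mul_self_eq_mul {f : Ω → ℝ} {c : ℝ}
    (hf : Integrable (fun ω => f ω ^ 2) μ) (hc : c ≠ 1)
    (h : ∫ ω, f ω * f ω ∂μ = c * ∫ ω, f ω * f ω ∂μ) : f =ᵐ[μ] 0 := by
  have hzero : ∫ ω, f ω ^ 2 ∂μ = 0 := by
    simp only [sq]
    by_contra hne
    exact hc (mul_right_cancel₀ hne (h.symm.trans (one_mul _).symm))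
  filter_upwards [(integral_eq_zero_iff_of_nonneg (fun ω => sq_nonneg (f ω)) hf).mp hzero]
    with ω hω
  simpa using hω

end Measurability

/-- The rectangular increment `Δ_{(s₁,s₂)} X(t₁,t₂)`. -/
def rectIncr {Ω : Type*} (X : ℝ → ℝ → Ω → ℝ) (s₁ t₁ s₂ t₂ : ℝ) (ω : Ω) : ℝ :=
  X t₁ t₂ ω - X s₁ t₂ ω - X t₁ s₂ ω + X s₁ s₂ ω

theorem rectIncr_swap_fst_sq {Ω : Type*} (X : ℝ → ℝ → Ω → ℝ) (s₁ t₁ s₂ t₂ : ℝ) (ω : Ω) :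
    rectIncr X t₁ s₁ s₂ t₂ ω ^ 2 = rectIncr X s₁ t₁ s₂ t₂ ω ^ 2 := by
  unfold rectIncr; ring

theorem rectIncr_swap_snd_sq {Ω : Type*} (X : ℝ → ℝ → Ω → ℝ) (s₁ t₁ s₂ t₂ : ℝ) (ω : Ω) :
    rectIncr X s₁ t₁ t₂ s₂ ω ^ 2 = rectIncr X s₁ t₁ s₂ t₂ ω ^ 2 := by
  unfold rectIncr; ring

noncomputable def fbmCov (H x y : ℝ) : ℝ :=
  (x ^ (2 * H) + y ^ (2 * H) - |x - y| ^ (2 * H)) / 2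

section Field

variable {Ω : Type*} [MeasurableSpace Ω] (P : Measure Ω) (H₁ H₂ : ℝ) (X : ℝ → ℝ → Ω → ℝ)

def IsSquareIntegrable : Prop :=
  ∀ t₁ t₂ : ℝ, 0 ≤ t₁ → 0 ≤ t₂ → Integrable (fun ω => X t₁ t₂ ω ^ 2) P

def HasSelfSimilarCovariance : Prop :=
  ∀ a₁ a₂ : ℝ, 0 < a₁ → 0 < a₂ →
    ∀ t₁ t₂ s₁ s₂ : ℝ, 0 ≤ t₁ → 0 ≤ t₂ → 0 ≤ s₁ → 0 ≤ s₂ →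
      ∫ ω, X (a₁ * t₁) (a₂ * t₂) ω * X (a₁ * s₁) (a₂ * s₂) ω ∂P
        = a₁ ^ (2 * H₁) * a₂ ^ (2 * H₂) * ∫ ω, X t₁ t₂ ω * X s₁ s₂ ω ∂P

def HasStationaryRectIncrements : Prop :=
  ∀ u₁ u₂ h₁ h₂ : ℝ, 0 ≤ u₁ → 0 ≤ u₂ → 0 ≤ h₁ → 0 ≤ h₂ →
    ∫ ω, rectIncr X u₁ (u₁ + h₁) u₂ (u₂ + h₂) ω ^ 2 ∂P = ∫ ω, rectIncr X 0 h₁ 0 h₂ ω ^ 2 ∂P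

variable {P H₁ H₂ X}

theorem HasSelfSimilarCovariance.ae_eq_zero_right (hss : HasSelfSimilarCovariance P H₁ H₂ X)
    (hH₂ : 0 < H₂) (hL2 : IsSquareIntegrable P X) {x : ℝ} (hx : 0 ≤ x) : X x 0 =ᵐ[P] 0 := by
  refine ae_eq_zero_of_integral_mul_self_eq_mul (hL2 x 0 hx le_rfl)
    (one_lt_rpow (by norm_num : (1 : ℝ) < 2) (by positivity : 0 < 2 * H₂)).ne' ?_
  simpa using hss 1 2 one_pos two_pos x 0 x 0 hx le_rfl hx le_rfl

theorem HasSelfSimilarCovariance.ae_eq_zero_left (hss : HasSelfSimilarCovariance P H₁ H₂ X)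
    (hH₁ : 0 < H₁) (hL2 : IsSquareIntegrable P X) {y : ℝ} (hy : 0 ≤ y) : X 0 y =ᵐ[P] 0 := by
  refine ae_eq_zero_of_integral_mul_self_eq_mul (hL2 0 y le_rfl hy)
    (one_lt_rpow (by norm_num : (1 : ℝ) < 2) (by positivity : 0 < 2 * H₁)).ne' ?_
  simpa using hss 2 1 two_pos one_pos 0 y 0 y le_rfl hy le_rfl hy

theorem HasSelfSimilarCovariance.integral_sq (hss : HasSelfSimilarCovariance P H₁ H₂ X)
    (hnorm : ∫ ω, X 1 1 ω ^ 2 ∂P = 1) {x y : ℝ} (hx : 0 < x) (hy : 0 < y) :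
    ∫ ω, X x y ω ^ 2 ∂P = x ^ (2 * H₁) * y ^ (2 * H₂) := by
  simpa [← sq, hnorm] using hss x y hx hy 1 1 1 1 zero_le_one zero_le_one zero_le_one zero_le_one

theorem integrable_and_integral_rectIncr_sq_of_lt (hH₁ : 0 < H₁) (hH₂ : 0 < H₂)
    (hL2 : IsSquareIntegrable P X) (hss : HasSelfSimilarCovariance P H₁ H₂ X)
    (hsi : HasStationaryRectIncrements P X) (hnorm : ∫ ω, X 1 1 ω ^ 2 ∂P = 1)
    {s₁ t₁ s₂ t₂ : ℝ} (hs₁ : 0 ≤ s₁) (hs₂ : 0 ≤ s₂) (h₁ : s₁ < t₁) (h₂ : s₂ < t₂) :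
    Integrable (fun ω => rectIncr X s₁ t₁ s₂ t₂ ω ^ 2) P ∧
      ∫ ω, rectIncr X s₁ t₁ s₂ t₂ ω ^ 2 ∂P = (t₁ - s₁) ^ (2 * H₁) * (t₂ - s₂) ^ (2 * H₂) := by
  have hcorner : (fun ω => rectIncr X 0 (t₁ - s₁) 0 (t₂ - s₂) ω ^ 2)
      =ᵐ[P] fun ω => X (t₁ - s₁) (t₂ - s₂) ω ^ 2 := by
    filter_upwards [hss.ae_eq_zero_left hH₁ hL2 (sub_pos.2 h₂).le,
      hss.ae_eq_zero_right hH₂ hL2 (sub_pos.2 h₁).le, hss.ae_eq_zero_left hH₁ hL2 le_rfl]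
      with ω h0y hx0 h00
    simp_all [rectIncr]
  have hval : ∫ ω, rectIncr X s₁ t₁ s₂ t₂ ω ^ 2 ∂P
      = (t₁ - s₁) ^ (2 * H₁) * (t₂ - s₂) ^ (2 * H₂) := by
    have := hsi s₁ s₂ (t₁ - s₁) (t₂ - s₂) hs₁ hs₂ (sub_pos.2 h₁).le (sub_pos.2 h₂).le
    rw [add_sub_cancel, add_sub_cancel] at this
    rw [this, integral_congr_ae hcorner, hss.integral_sq hnorm (sub_pos.2 h₁) (sub_pos.2 h₂)]
  refine ⟨?_, hval⟩
  by_contra hint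
  rw [integral_undef hint] at hval
  have : 0 < (t₁ - s₁) ^ (2 * H₁) * (t₂ - s₂) ^ (2 * H₂) := by
    have := sub_pos.2 h₁; have := sub_pos.2 h₂; positivity
  linarith

theorem integrable_and_integral_rectIncr_sq (hH₁ : 0 < H₁) (hH₂ : 0 < H₂)
    (hL2 : IsSquareIntegrable P X) (hss : HasSelfSimilarCovariance P H₁ H₂ X)
    (hsi : HasStationaryRectIncrements P X) (hnorm : ∫ ω, X 1 1 ω ^ 2 ∂P = 1)
    {s₁ t₁ s₂ t₂ : ℝ} (hs₁ : 0 ≤ s₁) (ht₁ : 0 ≤ t₁) (hs₂ : 0 ≤ s₂) (ht₂ : 0 ≤ t₂) :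
    Integrable (fun ω => rectIncr X s₁ t₁ s₂ t₂ ω ^ 2) P ∧
      ∫ ω, rectIncr X s₁ t₁ s₂ t₂ ω ^ 2 ∂P = |t₁ - s₁| ^ (2 * H₁) * |t₂ - s₂| ^ (2 * H₂) := by
  wlog h₁ : s₁ ≤ t₁ generalizing s₁ t₁
  · simpa only [rectIncr_swap_fst_sq, abs_sub_comm t₁] using this ht₁ hs₁ (le_of_not_ge h₁)
  wlog h₂ : s₂ ≤ t₂ generalizing s₂ t₂
  · simpa only [rectIncr_swap_snd_sq, abs_sub_comm t₂] using this ht₂ hs₂ (le_of_not_ge h₂)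
  rcases h₁.eq_or_lt with rfl | h₁
  · simp [rectIncr, zero_rpow (by positivity : 2 * H₁ ≠ 0)]
  rcases h₂.eq_or_lt with rfl | h₂
  · simp [rectIncr, zero_rpow (by positivity : 2 * H₂ ≠ 0)]
  rw [abs_of_pos (sub_pos.2 h₁), abs_of_pos (sub_pos.2 h₂)]
  exact integrable_and_integral_rectIncr_sq_of_lt hH₁ hH₂ hL2 hss hsi hnorm hs₁ hs₂ h₁ h₂

theorem integrable_and_integral_sum_rectIncr_sq (hH₁ : 0 < H₁) (hH₂ : 0 < H₂)
    (hL2 : IsSquareIntegrable P X) (hss : HasSelfSimilarCovariance P H₁ H₂ X)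
    (hsi : HasStationaryRectIncrements P X) (hnorm : ∫ ω, X 1 1 ω ^ 2 ∂P = 1)
    {ι κ : Type*} (I : Finset ι) (J : Finset κ) (c : ι → ℝ) (d : κ → ℝ)
    (l₁ r₁ : ι → ℝ) (l₂ r₂ : κ → ℝ) (hl₁ : ∀ i, 0 ≤ l₁ i) (hr₁ : ∀ i, 0 ≤ r₁ i)
    (hl₂ : ∀ j, 0 ≤ l₂ j) (hr₂ : ∀ j, 0 ≤ r₂ j) :
    Integrable
        (fun ω => ∑ i ∈ I, ∑ j ∈ J, c i * d j * rectIncr X (l₁ i) (r₁ i) (l₂ j) (r₂ j) ω ^ 2) P ∧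
      ∫ ω, ∑ i ∈ I, ∑ j ∈ J, c i * d j * rectIncr X (l₁ i) (r₁ i) (l₂ j) (r₂ j) ω ^ 2 ∂P
        = (∑ i ∈ I, c i * |r₁ i - l₁ i| ^ (2 * H₁)) *
          ∑ j ∈ J, d j * |r₂ j - l₂ j| ^ (2 * H₂) := by
  have h i j := integrable_and_integral_rectIncr_sq hH₁ hH₂ hL2 hss hsi hnorm
    (hl₁ i) (hr₁ i) (hl₂ j) (hr₂ j)
  have hint i j :
      Integrable (fun ω => c i * d j * rectIncr X (l₁ i) (r₁ i) (l₂ j) (r₂ j) ω ^ 2) P :=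
    (h i j).1.const_mul _
  refine ⟨integrable_finsetSum _ fun i _ => integrable_finsetSum _ fun j _ => hint i j, ?_⟩
  rw [integral_finsetSum _ fun i _ => integrable_finsetSum _ fun j _ => hint i j,
    Finset.sum_mul_sum]
  refine Finset.sum_congr rfl fun i _ => ?_
  rw [integral_finsetSum _ fun j _ => hint i j]
  refine Finset.sum_congr rfl fun j _ => ?_
  rw [integral_const_mul, (h i j).2]
  ring

theorem integrable_and_integral_mul_add_mul_swap (hH₁ : 0 < H₁) (hH₂ : 0 < H₂)
    (hL2 : IsSquareIntegrable P X) (hss : HasSelfSimilarCovariance P H₁ H₂ X)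
    (hsi : HasStationaryRectIncrements P X) (hnorm : ∫ ω, X 1 1 ω ^ 2 ∂P = 1)
    {s₁ s₂ t₁ t₂ : ℝ} (hs₁ : 0 ≤ s₁) (hs₂ : 0 ≤ s₂) (ht₁ : 0 ≤ t₁) (ht₂ : 0 ≤ t₂) :
    Integrable (fun ω => X s₁ s₂ ω * X t₁ t₂ ω + X s₁ t₂ ω * X t₁ s₂ ω) P ∧
      ∫ ω, (X s₁ s₂ ω * X t₁ t₂ ω + X s₁ t₂ ω * X t₁ s₂ ω) ∂P
        = 2 * fbmCov H₁ s₁ t₁ * fbmCov H₂ s₂ t₂ := by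
  have hnonneg {x y z : ℝ} (hx : 0 ≤ x) (hy : 0 ≤ y) (hz : 0 ≤ z) : ∀ i, 0 ≤ ![x, y, z] i := by
    intro i; fin_cases i <;> simp [hx, hy, hz]
  -- the nine rectangles `{[0,s₁], [0,t₁], [s₁,t₁]} × {[0,s₂], [0,t₂], [s₂,t₂]}`, with signs
  -- `+, +, -` in each coordinate
  obtain ⟨hint, hval⟩ := integrable_and_integral_sum_rectIncr_sq hH₁ hH₂ hL2 hss hsi hnorm
    Finset.univ Finset.univ ![1, 1, -1] ![1, 1, -1] ![0, 0, s₁] ![s₁, t₁, t₁] ![0, 0, s₂]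
    ![s₂, t₂, t₂] (hnonneg le_rfl le_rfl hs₁) (hnonneg hs₁ ht₁ ht₁) (hnonneg le_rfl le_rfl hs₂)
    (hnonneg hs₂ ht₂ ht₂)
  have hpolar : (fun ω => X s₁ s₂ ω * X t₁ t₂ ω + X s₁ t₂ ω * X t₁ s₂ ω) =ᵐ[P]
      fun ω => (1 / 2 : ℝ) * ∑ i, ∑ j, ![(1 : ℝ), 1, -1] i * ![(1 : ℝ), 1, -1] j *
        rectIncr X (![0, 0, s₁] i) (![s₁, t₁, t₁] i) (![0, 0, s₂] j) (![s₂, t₂, t₂] j) ω ^ 2 := by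
    filter_upwards [hss.ae_eq_zero_right hH₂ hL2 hs₁, hss.ae_eq_zero_right hH₂ hL2 ht₁,
      hss.ae_eq_zero_left hH₁ hL2 hs₂, hss.ae_eq_zero_left hH₁ hL2 ht₂,
      hss.ae_eq_zero_left hH₁ hL2 le_rfl] with ω h1 h2 h3 h4 h5
    simp only [Pi.zero_apply] at h1 h2 h3 h4 h5
    simp only [Fin.sum_univ_three, Matrix.cons_val_zero, Matrix.cons_val_one, Matrix.cons_val,
      rectIncr, h1, h2, h3, h4, h5]
    ring
  refine ⟨(hint.const_mul _).congr hpolar.symm, ?_⟩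
  rw [integral_congr_ae hpolar, integral_const_mul, hval]
  simp only [Fin.sum_univ_three, Matrix.cons_val_zero, Matrix.cons_val_one, Matrix.cons_val,
    sub_zero, abs_of_nonneg hs₁, abs_of_nonneg ht₁, abs_of_nonneg hs₂, abs_of_nonneg ht₂,
    abs_sub_comm t₁ s₁, abs_sub_comm t₂ s₂, fbmCov]
  ring

theorem integrable_mul (hH₁ : 0 < H₁) (hH₂ : 0 < H₂)
    (hL2 : IsSquareIntegrable P X) (hss : HasSelfSimilarCovariance P H₁ H₂ X)
    (hsi : HasStationaryRectIncrements P X) (hnorm : ∫ ω, X 1 1 ω ^ 2 ∂P = 1)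
    {s₁ s₂ t₁ t₂ : ℝ} (hs₁ : 0 ≤ s₁) (hs₂ : 0 ≤ s₂) (ht₁ : 0 ≤ t₁) (ht₂ : 0 ≤ t₂) :
    Integrable (fun ω => X s₁ s₂ ω * X t₁ t₂ ω) P := by
  have hsym {s₁ s₂ t₁ t₂ : ℝ} (hs₁ : 0 ≤ s₁) (hs₂ : 0 ≤ s₂) (ht₁ : 0 ≤ t₁) (ht₂ : 0 ≤ t₂) :=
    (integrable_and_integral_mul_add_mul_swap hH₁ hH₂ hL2 hss hsi hnorm hs₁ hs₂ ht₁ ht₂).1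
  have row {x y z : ℝ} (hx : 0 ≤ x) (hy : 0 ≤ y) (hz : 0 ≤ z) :
      AEMeasurable (fun ω => X x z ω * X y z ω) P :=
    ((hsym hx hz hy hz).aemeasurable.div_const 2).congr (ae_of_all _ fun ω => by ring)
  have col {x z w : ℝ} (hx : 0 ≤ x) (hz : 0 ≤ z) (hw : 0 ≤ w) :
      AEMeasurable (fun ω => X x z ω * X x w ω) P :=
    ((hsym hx hz hx hw).aemeasurable.div_const 2).congr (ae_of_all _ fun ω => by ring)
  refine integrable_mul_of_integrable_sq (hL2 _ _ hs₁ hs₂) (hL2 _ _ ht₁ ht₂) ?_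
  exact aemeasurable_mul_of_aemeasurable_cross (hL2 _ _ hs₁ hs₂).aemeasurable
    (hL2 _ _ ht₁ ht₂).aemeasurable (hL2 _ _ hs₁ ht₂).aemeasurable (hL2 _ _ ht₁ hs₂).aemeasurable
    (col hs₁ hs₂ ht₂) (row hs₁ ht₁ hs₂) (row ht₁ hs₁ ht₂) (col ht₁ ht₂ hs₂)
    (hsym hs₁ hs₂ ht₁ ht₂).aemeasurable

theorem integral_mul_add_integral_mul_swap (hH₁ : 0 < H₁) (hH₂ : 0 < H₂)
    (hL2 : IsSquareIntegrable P X) (hss : HasSelfSimilarCovariance P H₁ H₂ X)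
    (hsi : HasStationaryRectIncrements P X) (hnorm : ∫ ω, X 1 1 ω ^ 2 ∂P = 1)
    {s₁ s₂ t₁ t₂ : ℝ} (hs₁ : 0 ≤ s₁) (hs₂ : 0 ≤ s₂) (ht₁ : 0 ≤ t₁) (ht₂ : 0 ≤ t₂) :
    ∫ ω, X s₁ s₂ ω * X t₁ t₂ ω ∂P + ∫ ω, X s₁ t₂ ω * X t₁ s₂ ω ∂P
      = 2 * fbmCov H₁ s₁ t₁ * fbmCov H₂ s₂ t₂ := by
  rw [← (integrable_and_integral_mul_add_mul_swap hH₁ hH₂ hL2 hss hsi hnorm hs₁ hs₂ ht₁ ht₂).2,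
    integral_add (integrable_mul hH₁ hH₂ hL2 hss hsi hnorm hs₁ hs₂ ht₁ ht₂)
    (integrable_mul hH₁ hH₂ hL2 hss hsi hnorm hs₁ ht₂ ht₁ hs₂)]

end Field

theorem Ffun_eq_fbmCov (H v : ℝ) :
    Ffun H v = 2 * exp (-(H * v)) * fbmCov H 1 (exp v) := by
  have hsinh : |2 * sinh (v / 2)| = exp (-(v / 2)) * |1 - exp v| := by
    rw [← abs_of_pos (exp_pos (-(v / 2))), ← abs_mul, ← abs_neg]
    congr 1
    rw [sinh_eq, mul_sub, ← exp_add]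
    ring_nf
  rw [Ffun, fbmCov, hsinh, mul_rpow (exp_pos _).le (abs_nonneg _), ← exp_mul,
    ← exp_mul, one_rpow, cosh_eq]
  field_simp
  rw [mul_sub, mul_add, ← exp_add, show -(H * v) + 2 * H * v = H * v by ring]
  ring

theorem lamperti_covariance_symmetrization_general
    {Ω : Type*} [MeasurableSpace Ω] (P : Measure Ω)
    (H₁ H₂ : ℝ) (hH₁ : H₁ ∈ Set.Ioo (0:ℝ) 1) (hH₂ : H₂ ∈ Set.Ioo (0:ℝ) 1)
    (X : ℝ → ℝ → Ω → ℝ)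
    (hL2 : ∀ t₁ t₂ : ℝ, 0 ≤ t₁ → 0 ≤ t₂ →
      Integrable (fun ω => (X t₁ t₂ ω) ^ 2) P)
    (hss : ∀ a₁ a₂ : ℝ, 0 < a₁ → 0 < a₂ →
      ∀ t₁ t₂ s₁ s₂ : ℝ, 0 ≤ t₁ → 0 ≤ t₂ → 0 ≤ s₁ → 0 ≤ s₂ →
        ∫ ω, X (a₁ * t₁) (a₂ * t₂) ω * X (a₁ * s₁) (a₂ * s₂) ω ∂P
          = a₁ ^ (2 * H₁) * a₂ ^ (2 * H₂) * ∫ ω, X t₁ t₂ ω * X s₁ s₂ ω ∂P)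
    (hsi : ∀ u₁ u₂ h₁ h₂ : ℝ, 0 ≤ u₁ → 0 ≤ u₂ → 0 ≤ h₁ → 0 ≤ h₂ →
      ∫ ω, (X (u₁ + h₁) (u₂ + h₂) ω - X u₁ (u₂ + h₂) ω
            - X (u₁ + h₁) u₂ ω + X u₁ u₂ ω) ^ 2 ∂P
        = ∫ ω, (X h₁ h₂ ω - X 0 h₂ ω - X h₁ 0 ω + X 0 0 ω) ^ 2 ∂P)
    (hnorm : ∫ ω, (X 1 1 ω) ^ 2 ∂P = 1)
    (R : ℝ → ℝ → ℝ)
    (hR : ∀ v₁ v₂ : ℝ,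
      R v₁ v₂ = Real.exp (-(H₁ * v₁) - H₂ * v₂)
        * ∫ ω, X 1 1 ω * X (Real.exp v₁) (Real.exp v₂) ω ∂P) :
    ∀ v₁ v₂ : ℝ,
      R v₁ v₂ + R v₁ (-v₂) = (1 / 2) * Ffun H₁ v₁ * Ffun H₂ v₂
      ∧ R v₁ v₂ + R v₁ (-v₂) = 2 * Rzero H₁ H₂ v₁ v₂ := by
  intro v₁ v₂
  have hsym := integral_mul_add_integral_mul_swap hH₁.1 hH₂.1 hL2 hss hsi hnorm zero_le_one
    zero_le_one (exp_pos v₁).le (exp_pos v₂).le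
  have hscale : ∫ ω, X 1 (exp v₂) ω * X (exp v₁) 1 ω ∂P
      = exp (v₂ * (2 * H₂)) * ∫ ω, X 1 1 ω * X (exp v₁) (exp (-v₂)) ω ∂P := by
    simpa [← exp_add, ← exp_mul] using hss 1 (exp v₂) one_pos (exp_pos v₂) 1 1
      (exp v₁) (exp (-v₂)) zero_le_one zero_le_one (exp_pos v₁).le (exp_pos _).le
  have hRsum : R v₁ v₂ + R v₁ (-v₂) = (1 / 2) * Ffun H₁ v₁ * Ffun H₂ v₂ := calc
    R v₁ v₂ + R v₁ (-v₂) = exp (-(H₁ * v₁)) * exp (-(H₂ * v₂)) *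
        (∫ ω, X 1 1 ω * X (exp v₁) (exp v₂) ω ∂P + ∫ ω, X 1 (exp v₂) ω * X (exp v₁) 1 ω ∂P) := by
      rw [hR, hR, hscale, ← exp_add, mul_add, ← mul_assoc, ← exp_add]
      ring_nf
    _ = (1 / 2) * Ffun H₁ v₁ * Ffun H₂ v₂ := by
      rw [hsym, Ffun_eq_fbmCov, Ffun_eq_fbmCov]
      ring
  exact ⟨hRsum, hRsum.trans (by rw [Rzero]; ring)⟩

/-- Proposition 1 of the paper. For a field with self-similar
covariance, stationary rectangular increments (second moments) and `E[X(1,1)²] = 1`,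
the covariance `R` of its Lamperti transform satisfies
`R(v₁,v₂) + R(v₁,−v₂) = (1/2) F_{H₁}(v₁) F_{H₂}(v₂) = 2 R₀(v₁,v₂)`. -/
theorem lamperti_covariance_symmetrization
    {Ω : Type*} [MeasurableSpace Ω] (P : Measure Ω) [IsProbabilityMeasure P]
    (H₁ H₂ : ℝ) (hH₁ : H₁ ∈ Set.Ioo (0:ℝ) 1) (hH₂ : H₂ ∈ Set.Ioo (0:ℝ) 1)
    (X : ℝ → ℝ → Ω → ℝ)
    (hL2 : ∀ t₁ t₂ : ℝ, 0 ≤ t₁ → 0 ≤ t₂ →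
      Integrable (fun ω => (X t₁ t₂ ω) ^ 2) P)
    (hss : ∀ a₁ a₂ : ℝ, 0 < a₁ → 0 < a₂ →
      ∀ t₁ t₂ s₁ s₂ : ℝ, 0 ≤ t₁ → 0 ≤ t₂ → 0 ≤ s₁ → 0 ≤ s₂ →
        ∫ ω, X (a₁ * t₁) (a₂ * t₂) ω * X (a₁ * s₁) (a₂ * s₂) ω ∂P
          = a₁ ^ (2 * H₁) * a₂ ^ (2 * H₂) * ∫ ω, X t₁ t₂ ω * X s₁ s₂ ω ∂P)
    (hsi : ∀ u₁ u₂ h₁ h₂ : ℝ, 0 ≤ u₁ → 0 ≤ u₂ → 0 ≤ h₁ → 0 ≤ h₂ →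
      ∫ ω, (X (u₁ + h₁) (u₂ + h₂) ω - X u₁ (u₂ + h₂) ω
            - X (u₁ + h₁) u₂ ω + X u₁ u₂ ω) ^ 2 ∂P
        = ∫ ω, (X h₁ h₂ ω - X 0 h₂ ω - X h₁ 0 ω + X 0 0 ω) ^ 2 ∂P)
    (hnorm : ∫ ω, (X 1 1 ω) ^ 2 ∂P = 1)
    (R : ℝ → ℝ → ℝ)
    (hR : ∀ v₁ v₂ : ℝ,
      R v₁ v₂ = Real.exp (-(H₁ * v₁) - H₂ * v₂)
        * ∫ ω, X 1 1 ω * X (Real.exp v₁) (Real.exp v₂) ω ∂P) :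
    ∀ v₁ v₂ : ℝ,
      R v₁ v₂ + R v₁ (-v₂) = (1 / 2) * Ffun H₁ v₁ * Ffun H₂ v₂
      ∧ R v₁ v₂ + R v₁ (-v₂) = 2 * Rzero H₁ H₂ v₁ v₂ :=
  lamperti_covariance_symmetrization_general P H₁ H₂ hH₁ hH₂ X hL2 hss hsi hnorm R hR
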